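/- The map ι : Σ → M_Σ, s ↦ [1H, s], is injective and satisfies ι(n • s) = n • ι(s) for all n ∈ N and s ∈ Σ; moreover, if Σ meets every G-orbit in M then the image ι(Σ) meets every G-orbit in M_Σ. -/

import Mathlib

open Pointwise

section Resolution

variable {G M : Type*} [Group G] [MulAction G M]

/-- The relation on `G × Σ` whose quotient is the resolution `M_Σ = (G/H) ×_W Σ`:
`(g, s)` is identified with `(g * n⁻¹ * h, n • s)` for `n ∈ N` and `h ∈ H`
(taking `n = 1` this collapses `G` to the coset space `G/H`). -/
def resRel (S : Set M) (N H : Subgroup G) : G × S → G × S → Prop :=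
  fun p q => ∃ n ∈ N, ∃ h ∈ H, q.1 = p.1 * n⁻¹ * h ∧ (q.2 : M) = n • (p.2 : M)

/-- The resolution `M_Σ` of the `G`-set `M` with respect to `(Σ, N, H)`. -/
def Res (S : Set M) (N H : Subgroup G) : Type _ :=
  Quot (resRel S N H)

/-- The class `[gH, s]` in the resolution `M_Σ`. -/
def resMk (S : Set M) (N H : Subgroup G) (g : G) (s : S) : Res S N H :=
  Quot.mk _ (g, s)

/-- The `G`-action on the resolution: `l • [gH, s] = [lgH, s]`. -/
instance resAction (S : Set M) (N H : Subgroup G) : MulAction G (Res S N H) where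
  smul l := Quot.map (fun p => (l * p.1, p.2)) (by
    rintro ⟨g, s⟩ ⟨g', s'⟩ hr
    obtain ⟨n, hn, h, hh, hg, hs⟩ := hr
    exact ⟨n, hn, h, hh, by simp only at hg ⊢; rw [hg]; simp [mul_assoc], hs⟩)
  one_smul := by
    intro x
    induction x using Quot.ind with
    | mk p =>
      show Quot.mk (resRel S N H) ((1 : G) * p.1, p.2) = Quot.mk (resRel S N H) p
      rw [one_mul]
  mul_smul := by
    intro a b x
    induction x using Quot.ind with
    | mk p =>
      show Quot.mk (resRel S N H) (a * b * p.1, p.2)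
          = Quot.mk (resRel S N H) (a * (b * p.1), p.2)
      rw [mul_assoc]

end Resolution

section ResolutionSection

variable {G M : Type*} [Group G] [MulAction G M] {S : Set M} {N H : Subgroup G}

theorem smul_resMk (l g : G) (s : S) : l • resMk S N H g s = resMk S N H (l * g) s :=
  rfl

theorem resMk_smul_eq_resMk_mul {n : G} (hn : n ∈ N) (g : G) (s : S) (hns : n • (s : M) ∈ S) :
    resMk S N H g ⟨n • (s : M), hns⟩ = resMk S N H (g * n) s :=
  (Quot.sound ⟨n, hn, 1, H.one_mem, by simp, rfl⟩).symm

theorem exists_smul_resMk_one (x : Res S N H) : ∃ (l : G) (s : S), x = l • resMk S N H 1 s := by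
  induction x using Quot.ind with
  | mk p => exact ⟨p.1, p.2, by rw [smul_resMk, mul_one]; rfl⟩

/-- `[gH, s] ↦ g • s` is well defined because `h ∈ H` fixes the
representative `n • s`, which itself lies in `Σ`. -/
def resEval (hHS : ∀ h ∈ H, ∀ s ∈ S, h • s = s) : Res S N H → M :=
  Quot.lift (fun p => p.1 • (p.2 : M)) <| by
    rintro ⟨g, s⟩ ⟨_, s'⟩ ⟨n, -, h, hh, rfl, hs⟩
    change g • (s : M) = (g * n⁻¹ * h) • (s' : M)
    rw [mul_smul, hHS h hh s' s'.2, hs, mul_smul, inv_smul_smul]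

theorem resEval_resMk (hHS : ∀ h ∈ H, ∀ s ∈ S, h • s = s) (g : G) (s : S) :
    resEval hHS (resMk S N H g s) = g • (s : M) :=
  rfl

theorem resMk_one_injective (hHS : ∀ h ∈ H, ∀ s ∈ S, h • s = s) :
    Function.Injective (resMk S N H 1) := fun s t hst =>
  Subtype.ext <| by simpa [resEval_resMk] using congrArg (resEval hHS) hst

end ResolutionSection

theorem resolution_section_embeds_general
    {G M : Type*} [Group G] [MulAction G M] (S : Set M) (N H : Subgroup G)
    (hNS : ∀ n ∈ N, ∀ s ∈ S, n • s ∈ S)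
    (hHS : ∀ h ∈ H, ∀ s ∈ S, h • s = s) :
    (Function.Injective fun s : S => resMk S N H 1 s) ∧
    (∀ n (hn : n ∈ N) (s : M) (hs : s ∈ S),
      resMk S N H 1 ⟨n • s, hNS n hn s hs⟩ = n • resMk S N H 1 ⟨s, hs⟩) ∧
    ((∀ m : M, ∃ g : G, ∃ t ∈ S, m = g • t) →
      ∀ x : Res S N H, ∃ (l : G) (s : S), x = l • resMk S N H 1 s) :=
  ⟨resMk_one_injective hHS,
    fun n hn s hs => by
      simpa only [smul_resMk, one_mul, mul_one] using resMk_smul_eq_resMk_mul hn 1 ⟨s, hs⟩ _,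
    fun _ => exists_smul_resMk_one⟩

/-- `Σ` is injectively and `N`-equivariantly mapped into `M_Σ` via `s ↦ [1H, s]`,
and if `Σ` meets every `G`-orbit in `M` then its image meets every `G`-orbit in `M_Σ`. -/
theorem resolution_section_embeds
    {G M : Type*} [Group G] [MulAction G M] (S : Set M) (N H : Subgroup G)
    (hHN : H ≤ N) (hnorm : ∀ n ∈ N, ∀ h ∈ H, n * h * n⁻¹ ∈ H)
    (hNS : ∀ n ∈ N, ∀ s ∈ S, n • s ∈ S)
    (hHS : ∀ h ∈ H, ∀ s ∈ S, h • s = s) :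
    (Function.Injective fun s : S => resMk S N H 1 s) ∧
    (∀ n (hn : n ∈ N) (s : M) (hs : s ∈ S),
      resMk S N H 1 ⟨n • s, hNS n hn s hs⟩ = n • resMk S N H 1 ⟨s, hs⟩) ∧
    ((∀ m : M, ∃ g : G, ∃ t ∈ S, m = g • t) →
      ∀ x : Res S N H, ∃ (l : G) (s : S), x = l • resMk S N H 1 s) :=
  resolution_section_embeds_general S N H hNS hHS
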